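/- For b ≥ 2, let φ = (√(b²+4) - b)/2 be the fractional part of the b-th metallic ratio, define Λ(x) = (x·log x - (1-2x)·log(1-2x) - (3x-1)·log(3x-1))/x, and set β = φ/(1 - (b-2)·φ). Then Λ(β) = -φ·log φ - (1-φ)·log(1-φ). -/

import Mathlib

/-! Writing `t` for `φ_b`, the relation `t² + b t = 1` gives `1 - (b - 2) t = t (t + 2)`, so
`β = 1 / (t + 2)`. Then `1 - 2β = t β` and `3β - 1 = (1 - t) β`, and expanding the logarithms in `Λ`
the terms in `log (t + 2)` cancel, leaving the binary entropy of `t`. -/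

noncomputable def Lam : ℝ → ℝ := fun x =>
  (x * Real.log x - (1 - 2*x) * Real.log (1 - 2*x) - (3*x - 1) * Real.log (3*x - 1)) / x

open Real

noncomputable def metallicFrac (b : ℝ) : ℝ := (√(b ^ 2 + 4) - b) / 2

theorem metallicFrac_pos (b : ℝ) : 0 < metallicFrac b := by
  have : b < √(b ^ 2 + 4) := by
    rcases lt_or_ge b 0 with hb | hb
    · exact hb.trans_le (sqrt_nonneg _)
    · exact (lt_sqrt hb).2 (by linarith)
  unfold metallicFrac
  linarith

theorem metallicFrac_sq_add_mul (b : ℝ) : metallicFrac b ^ 2 + b * metallicFrac b = 1 := by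
  have hs : √(b ^ 2 + 4) ^ 2 = b ^ 2 + 4 := sq_sqrt (by positivity)
  unfold metallicFrac
  linear_combination hs / 4

theorem div_one_sub_mul_eq_inv_add_two {b t : ℝ} (h : t ^ 2 + b * t = 1) :
    t / (1 - (b - 2) * t) = (t + 2)⁻¹ := by
  have ht : t ≠ 0 := by rintro rfl; norm_num at h
  rw [show 1 - (b - 2) * t = t * (t + 2) by linear_combination -h, div_mul_cancel_left₀ ht]

-- `log` takes junk values at `0`, but there the factor `x` vanishes.
theorem mul_log_div_eq {x y : ℝ} (hy : y ≠ 0) : x * log (x / y) = x * (log x - log y) := by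
  rcases eq_or_ne x 0 with rfl | hx
  · simp
  · rw [log_div hx hy]

theorem Lam_eq_of_ne_zero {x : ℝ} (hx : x ≠ 0) :
    Lam x = log x - (1 - 2 * x) / x * log (1 - 2 * x) - (3 * x - 1) / x * log (3 * x - 1) := by
  unfold Lam
  field_simp

theorem Lam_inv_add_two {t : ℝ} (ht : t + 2 ≠ 0) :
    Lam (t + 2)⁻¹ = -t * log t - (1 - t) * log (1 - t) := by
  have h2 : 1 - 2 * (t + 2)⁻¹ = t / (t + 2) := by field_simp; ring
  have h3 : 3 * (t + 2)⁻¹ - 1 = (1 - t) / (t + 2) := by field_simp; ring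
  rw [Lam_eq_of_ne_zero (inv_ne_zero ht), h2, h3, log_inv,
    show t / (t + 2) / (t + 2)⁻¹ = t by field_simp,
    show (1 - t) / (t + 2) / (t + 2)⁻¹ = 1 - t by field_simp,
    mul_log_div_eq ht, mul_log_div_eq ht]
  ring

theorem stmt15_general (b : ℕ) :
    let φ : ℝ := (Real.sqrt ((b : ℝ)^2 + 4) - b) / 2
    let β : ℝ := φ / (1 - ((b : ℝ) - 2) * φ)
    Lam β = -φ * Real.log φ - (1 - φ) * Real.log (1 - φ) := by
  show Lam (metallicFrac b / (1 - ((b : ℝ) - 2) * metallicFrac b)) = _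
  rw [div_one_sub_mul_eq_inv_add_two (metallicFrac_sq_add_mul b)]
  exact Lam_inv_add_two (by linarith [metallicFrac_pos b])

theorem stmt15 (b : ℕ) (hb : 2 ≤ b) :
    let φ : ℝ := (Real.sqrt ((b : ℝ)^2 + 4) - b) / 2
    let β : ℝ := φ / (1 - ((b : ℝ) - 2) * φ)
    Lam β = -φ * Real.log φ - (1 - φ) * Real.log (1 - φ) :=
  stmt15_general b
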